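/- Let W^n = (W_1,…,W_n) be random variables each taking values in a finite alphabet 𝒲 with ‖P_{W^n} − ∏_{t=1}^n Q_W‖_TV = ε for some pmf Q_W and ε ∈ (0,1/4), and let T be uniformly distributed on [n] independent of W^n. Then I(W_T ; T) ≤ g(ε), where g(ε) = 4ε·log(|𝒲|/ε). In the paper's application W_t = (X_t,Y_t,Z_t), so I(X_T,Y_T,Z_T ; T) is bounded by g(ε) with g(ε) = 4ε·log(|𝒳||𝒴||𝒵|/ε). -/

import Mathlib

open scoped BigOperators
open Finset Filter

noncomputable section

/-- `p` is a probability mass function on the finite type `α`. -/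
def IsPmf {α : Type} [Fintype α] (p : α → ℝ) : Prop :=
  (∀ a, 0 ≤ p a) ∧ ∑ a, p a = 1

/-- Total variation distance `‖p − q‖_TV = (1/2) Σ |p − q|`. -/
def TV {α : Type} [Fintype α] (p q : α → ℝ) : ℝ :=
  (∑ a, |p a - q a|) / 2

/-- The distribution (law) of the random variable `f` when the underlying
probability mass function is `p`. -/
def lawOf {Ω α : Type} [Fintype Ω] [DecidableEq α]
    (p : Ω → ℝ) (f : Ω → α) : α → ℝ :=
  fun a => ∑ ω, if f ω = a then p ω else 0

/-- Shannon entropy (base 2) of a pmf on a finite type. -/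
def H2 {α : Type} [Fintype α] (p : α → ℝ) : ℝ :=
  -∑ a, p a * Real.logb 2 (p a)

/-- Entropy `H(X)` of a random variable `X` under the pmf `p`. -/
def ent {Ω α : Type} [Fintype Ω] [Fintype α] [DecidableEq α]
    (p : Ω → ℝ) (X : Ω → α) : ℝ :=
  H2 (lawOf p X)

/-- Mutual information `I(X;Y)` under the pmf `p`. -/
def mi {Ω α β : Type} [Fintype Ω] [Fintype α] [Fintype β]
    [DecidableEq α] [DecidableEq β]
    (p : Ω → ℝ) (X : Ω → α) (Y : Ω → β) : ℝ :=
  ent p X + ent p Y - ent p (fun ω => (X ω, Y ω))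

/-- Conditional mutual information `I(X;Y|W)` under the pmf `p`. -/
def cmi {Ω α β γ : Type} [Fintype Ω] [Fintype α] [Fintype β] [Fintype γ]
    [DecidableEq α] [DecidableEq β] [DecidableEq γ]
    (p : Ω → ℝ) (X : Ω → α) (Y : Ω → β) (W : Ω → γ) : ℝ :=
  ent p (fun ω => (X ω, W ω)) + ent p (fun ω => (Y ω, W ω))
    - ent p (fun ω => (X ω, Y ω, W ω)) - ent p W

/-- `X` and `Y` are conditionally independent given `W` under `p`
(the Markov chain `X − W − Y`). -/
def CondIndep {Ω α β γ : Type} [Fintype Ω] [Fintype α] [Fintype β] [Fintype γ]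
    [DecidableEq α] [DecidableEq β] [DecidableEq γ]
    (p : Ω → ℝ) (X : Ω → α) (Y : Ω → β) (W : Ω → γ) : Prop :=
  ∀ x y w,
    lawOf p (fun ω => (X ω, Y ω, W ω)) (x, y, w) * lawOf p W w
      = lawOf p (fun ω => (X ω, W ω)) (x, w) * lawOf p (fun ω => (Y ω, W ω)) (y, w)

/-- `X` and `Y` are independent under `p`. -/
def IndepRV {Ω α β : Type} [Fintype Ω] [Fintype α] [Fintype β]
    [DecidableEq α] [DecidableEq β]
    (p : Ω → ℝ) (X : Ω → α) (Y : Ω → β) : Prop :=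
  ∀ a b, lawOf p (fun ω => (X ω, Y ω)) (a, b) = lawOf p X a * lawOf p Y b

/-! Write `P_t` for the law of `W_t` and `P̄ = (1/n) ∑ₜ P_t` for the law of `W_T`. By the chain
rule `H(W_T, T) = H(T) + (1/n) ∑ₜ H(P_t)`, so `I(W_T; T) = H(P̄) - (1/n) ∑ₜ H(P_t)`. Every `P_t`
is a marginal of `P_{W^n}` and `P̄` is an average of them, so all of them are `ε`-close to `Q` in
total variation, and a Fannes-type continuity bound `|H(P) - H(Q)| ≤ 2ε log(|𝒲|/ε)` bounds each
difference `H(P̄) - H(P_t)` by `4ε log(|𝒲|/ε)`. -/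

open Real

theorem negMulLog_le_tangent {a b : ℝ} (ha : 0 ≤ a) (hb : 0 < b) :
    negMulLog a ≤ -a * log b + b - a := by
  have key := negMulLog_mul b (a / b)
  rw [mul_div_cancel₀ a hb.ne'] at key
  have h := mul_le_mul_of_nonneg_left (negMulLog_le_one_sub_self (div_nonneg ha hb.le)) hb.le
  rw [key, negMulLog]
  field_simp at h ⊢
  linarith

theorem mul_log_le_mul_log_of_le {x y : ℝ} (hx : 0 ≤ x) (hxy : x ≤ y) :
    x * log x ≤ x * log y := by
  rcases hx.eq_or_lt with rfl | hx
  · simp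
  · exact mul_le_mul_of_nonneg_left (log_le_log hx hxy) hx.le

theorem negMulLog_add_le {x y : ℝ} (hx : 0 ≤ x) (hy : 0 ≤ y) :
    negMulLog (x + y) ≤ negMulLog x + negMulLog y := by
  have h₁ := mul_log_le_mul_log_of_le hx (le_add_of_nonneg_right hy : x ≤ x + y)
  have h₂ := mul_log_le_mul_log_of_le hy (le_add_of_nonneg_left hx : y ≤ x + y)
  simp only [negMulLog, neg_mul]
  linarith

theorem negMulLog_sub_negMulLog_add_le {y d : ℝ} (hy : 0 ≤ y) (hd : 0 ≤ d) (h₁ : y + d ≤ 1) :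
    negMulLog y - negMulLog (y + d) ≤ d := by
  rcases (add_nonneg hy hd).eq_or_lt with h₀ | hpos
  · obtain ⟨rfl, rfl⟩ : y = 0 ∧ d = 0 := by constructor <;> linarith
    simp
  · have htan := negMulLog_le_tangent hy hpos
    have hlog : d * log (y + d) ≤ 0 := mul_nonpos_of_nonneg_of_nonpos hd (log_nonpos hpos.le h₁)
    simp only [negMulLog] at htan ⊢
    nlinarith

theorem mul_log_two_le_negMulLog {d : ℝ} (hd : 0 ≤ d) (hd₂ : d ≤ 1 / 2) :
    d * log 2 ≤ negMulLog d := by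
  rcases hd.eq_or_lt with rfl | hd
  · simp
  · have h : log d ≤ -log 2 := by
      simpa [log_inv] using log_le_log hd (hd₂.trans_eq (one_div 2))
    rw [negMulLog, neg_mul, ← mul_neg]
    exact mul_le_mul_of_nonneg_left (by linarith) hd.le

theorem abs_negMulLog_sub_le {x y : ℝ} (hx₀ : 0 ≤ x) (hx₁ : x ≤ 1) (hy₀ : 0 ≤ y) (hy₁ : y ≤ 1)
    (hxy : |x - y| ≤ 1 / 2) :
    |negMulLog x - negMulLog y| ≤ negMulLog |x - y| + (1 - log 2) * |x - y| := by
  wlog hyx : y ≤ x generalizing x y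
  · rw [abs_sub_comm, abs_sub_comm x] at *
    exact this hy₀ hy₁ hx₀ hx₁ hxy (le_of_not_ge hyx)
  obtain ⟨d, hd, rfl⟩ : ∃ d, 0 ≤ d ∧ x = y + d := ⟨x - y, by linarith, by ring⟩
  rw [add_sub_cancel_left, abs_of_nonneg hd] at *
  have hlog2 : log 2 < 1 := by linarith [log_two_lt_d9]
  have hlower := negMulLog_sub_negMulLog_add_le hy₀ hd hx₁
  have hupper := negMulLog_add_le hy₀ hd
  have hd_le := mul_log_two_le_negMulLog hd hxy
  rw [abs_le]
  constructor <;> nlinarith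

theorem sum_negMulLog_le {α : Type} [Fintype α] [Nonempty α] (d : α → ℝ) (hd : ∀ a, 0 ≤ d a) :
    ∑ a, negMulLog (d a) ≤ (∑ a, d a) * log (Fintype.card α) + negMulLog (∑ a, d a) := by
  set k : ℝ := (Fintype.card α : ℝ)
  have hk : 0 < k := by positivity
  have jensen := concaveOn_negMulLog.le_map_sum (t := univ) (w := fun _ => k⁻¹) (p := d)
    (fun _ _ => by positivity) (by simp [k]) (fun a _ => hd a)
  simp only [smul_eq_mul] at jensen
  rw [← mul_sum, ← mul_sum, negMulLog_mul, negMulLog, log_inv] at jensen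
  have := mul_le_mul_of_nonneg_left jensen hk.le
  field_simp at this
  linarith

theorem abs_sum_negMulLog_sub_le {α : Type} [Fintype α] [Nonempty α] {P Q : α → ℝ}
    (hP : IsPmf P) (hQ : IsPmf Q) (hPQ : ∑ a, |P a - Q a| ≤ 1 / 2) :
    |∑ a, negMulLog (P a) - ∑ a, negMulLog (Q a)|
      ≤ (∑ a, |P a - Q a|) * log (Fintype.card α) + negMulLog (∑ a, |P a - Q a|)
        + (1 - log 2) * ∑ a, |P a - Q a| := by
  have le_one {R : α → ℝ} (hR : IsPmf R) (a : α) : R a ≤ 1 :=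
    hR.2 ▸ single_le_sum (fun b _ => hR.1 b) (mem_univ a)
  calc |∑ a, negMulLog (P a) - ∑ a, negMulLog (Q a)|
      ≤ ∑ a, |negMulLog (P a) - negMulLog (Q a)| := by
        rw [← sum_sub_distrib]; exact abs_sum_le_sum_abs _ _
    _ ≤ ∑ a, (negMulLog |P a - Q a| + (1 - log 2) * |P a - Q a|) := by
        gcongr with a
        exact abs_negMulLog_sub_le (hP.1 a) (le_one hP a) (hQ.1 a) (le_one hQ a)
          ((single_le_sum (fun b _ => abs_nonneg (P b - Q b)) (mem_univ a)).trans hPQ)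
    _ ≤ _ := by
        rw [sum_add_distrib, ← mul_sum]
        linarith [sum_negMulLog_le (fun a => |P a - Q a|) (fun a => abs_nonneg _)]

-- The tangent line of `negMulLog` at `2ε`, and `log 4 > 1`.
theorem fannes_bound_le {δ ε k : ℝ} (hδ : 0 ≤ δ) (hδε : δ ≤ 2 * ε) (hε : 0 < ε) (hε₄ : ε < 1 / 4)
    (hk : 1 ≤ k) :
    δ * log k + negMulLog δ + (1 - log 2) * δ ≤ 2 * ε * log (k / ε) := by
  have htan := negMulLog_le_tangent hδ (by positivity : 0 < 2 * ε)
  have hlog4ε : log (4 * ε) ≤ log k :=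
    (log_nonpos (by positivity) (by linarith)).trans (log_nonneg hk)
  have hlog4 : log 4 = 2 * log 2 := by
    rw [show (4 : ℝ) = 2 ^ 2 by norm_num, log_pow]; norm_num
  rw [log_mul (by norm_num) hε.ne'] at hlog4ε
  rw [log_div (by positivity) hε.ne'] at *
  rw [log_mul (by norm_num) hε.ne'] at htan
  nlinarith [log_two_gt_d9]

theorem H2_eq_sum_negMulLog_div {α : Type} [Fintype α] (P : α → ℝ) :
    H2 P = (∑ a, negMulLog (P a)) / log 2 := by
  simp only [H2, negMulLog, logb, sum_div, ← sum_neg_distrib]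
  congr 1 with a
  ring

theorem abs_H2_sub_le {α : Type} [Fintype α] {P Q : α → ℝ} (hP : IsPmf P) (hQ : IsPmf Q)
    {ε : ℝ} (hε : 0 < ε) (hε₄ : ε < 1 / 4) (hPQ : ∑ a, |P a - Q a| ≤ 2 * ε) :
    |H2 P - H2 Q| ≤ 2 * ε * logb 2 (Fintype.card α / ε) := by
  have : Nonempty α := by
    by_contra h
    simpa [not_nonempty_iff.mp h] using hQ.2
  have hk : (1 : ℝ) ≤ Fintype.card α := by exact_mod_cast Fintype.card_pos
  have hnats := (abs_sum_negMulLog_sub_le hP hQ (by linarith)).trans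
    (fannes_bound_le (sum_nonneg fun a _ => abs_nonneg _) hPQ hε hε₄ hk)
  rw [H2_eq_sum_negMulLog_div, H2_eq_sum_negMulLog_div, ← sub_div, abs_div,
    abs_of_pos (log_pos one_lt_two), logb, ← mul_div_assoc]
  gcongr

section lawOf

variable {Ω α β : Type} [Fintype Ω] [DecidableEq α] [DecidableEq β]

theorem sum_lawOf [Fintype α] (p : Ω → ℝ) (f : Ω → α) : ∑ a, lawOf p f a = ∑ ω, p ω := by
  simp only [lawOf]
  rw [sum_comm]
  simp

theorem lawOf_isPmf [Fintype α] {p : Ω → ℝ} (hp : IsPmf p) (f : Ω → α) : IsPmf (lawOf p f) :=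
  ⟨fun a => sum_nonneg fun ω _ => by split_ifs <;> simp [hp.1 ω], (sum_lawOf p f).trans hp.2⟩

theorem sum_lawOf_prodMk_right [Fintype β] (p : Ω → ℝ) (f : Ω → α) (g : Ω → β) (a : α) :
    ∑ b, lawOf p (fun ω => (f ω, g ω)) (a, b) = lawOf p f a := by
  simp only [lawOf, Prod.mk.injEq]
  rw [sum_comm]
  congr 1 with ω
  by_cases h : f ω = a <;> simp [h]

theorem sum_lawOf_prodMk_left [Fintype α] (p : Ω → ℝ) (f : Ω → α) (g : Ω → β) (b : β) :
    ∑ a, lawOf p (fun ω => (f ω, g ω)) (a, b) = lawOf p g b := by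
  simp only [lawOf, Prod.mk.injEq]
  rw [sum_comm]
  congr 1 with ω
  by_cases h : g ω = b <;> simp [h]

theorem sum_abs_lawOf_sub_le [Fintype α] (p q : Ω → ℝ) (f : Ω → α) :
    ∑ a, |lawOf p f a - lawOf q f a| ≤ ∑ ω, |p ω - q ω| :=
  calc ∑ a, |lawOf p f a - lawOf q f a|
      = ∑ a, |∑ ω, if f ω = a then p ω - q ω else 0| := by
        simp only [lawOf, ← sum_sub_distrib]
        congr! 3
        split_ifs <;> simp
    _ ≤ ∑ a, ∑ ω, |if f ω = a then p ω - q ω else 0| := sum_le_sum fun a _ => abs_sum_le_sum_abs _ _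
    _ = ∑ ω, |p ω - q ω| := by
        rw [sum_comm]
        simp [apply_ite (|·|)]

end lawOf

theorem lawOf_pi_eval {ι α : Type} [Fintype ι] [DecidableEq ι] [Fintype α] [DecidableEq α]
    {Q : ι → α → ℝ} (hQ : ∀ s, ∑ a, Q s a = 1) (t : ι) (a : α) :
    lawOf (fun w : ι → α => ∏ s, Q s (w s)) (fun w => w t) a = Q t a := by
  -- the indicator of `w t = a` is absorbed into the `t`-th factor, so the sum factorizes
  set f : ι → α → ℝ := fun s x => if s = t ∧ x ≠ a then 0 else Q s x
  have hterm (w : ι → α) : (if w t = a then ∏ s, Q s (w s) else 0) = ∏ s, f s (w s) := by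
    split_ifs with h
    · exact prod_congr rfl fun s _ => by grind
    · exact (prod_eq_zero (mem_univ t) (by simp [f, h])).symm
  have hrow (s : ι) : ∑ x, f s x = if s = t then Q t a else 1 := by
    split_ifs with h
    · subst h; simp [f]
    · simp [f, h, hQ s]
  simp only [lawOf, hterm, ← Fintype.prod_sum, hrow, prod_ite_eq']
  simp

theorem H2_chain_rule {ι α : Type} [Fintype ι] [Fintype α] (ρ : ι → ℝ) (P : ι → α → ℝ)
    (hP : ∀ t, ∑ a, P t a = 1) :
    H2 (fun x : α × ι => ρ x.2 * P x.2 x.1) = H2 ρ + ∑ t, ρ t * H2 (P t) := by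
  simp only [H2_eq_sum_negMulLog_div, Fintype.sum_prod_type_right, negMulLog_mul, sum_add_distrib,
    ← sum_mul, ← mul_sum, hP, one_mul, add_div, sum_div, mul_div_assoc]

section timeSharing

variable {ι Ω α : Type} [Fintype ι] [DecidableEq ι] [Fintype Ω] [DecidableEq α]

theorem lawOf_timeSharing_pair (ρ : ι → ℝ) (p : Ω → ℝ) (X : ι → Ω → α) (a : α) (t : ι) :
    lawOf (fun ω : ι × Ω => ρ ω.1 * p ω.2) (fun ω => (X ω.1 ω.2, ω.1)) (a, t)
      = ρ t * lawOf p (X t) a := by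
  simp only [lawOf, Fintype.sum_prod_type, Prod.mk.injEq, mul_sum]
  rw [sum_eq_single t (fun s _ hs => by simp [hs]) (by simp)]
  congr 1 with ω
  split_ifs <;> simp_all

theorem mi_timeSharing [Fintype α] (ρ : ι → ℝ) {p : Ω → ℝ} (hp : ∑ ω, p ω = 1) (X : ι → Ω → α) :
    mi (fun ω : ι × Ω => ρ ω.1 * p ω.2) (fun ω => X ω.1 ω.2) (fun ω => ω.1)
      = H2 (fun a => ∑ t, ρ t * lawOf p (X t) a) - ∑ t, ρ t * H2 (lawOf p (X t)) := by
  have hP (t : ι) : ∑ a, lawOf p (X t) a = 1 := (sum_lawOf p (X t)).trans hp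
  have hpair := lawOf_timeSharing_pair ρ p X
  have hX : lawOf (fun ω : ι × Ω => ρ ω.1 * p ω.2) (fun ω => X ω.1 ω.2)
      = fun a => ∑ t, ρ t * lawOf p (X t) a := by
    ext a; rw [← sum_lawOf_prodMk_right _ _ (fun ω : ι × Ω => ω.1)]; simp only [hpair]
  have hT : lawOf (fun ω : ι × Ω => ρ ω.1 * p ω.2) (fun ω => ω.1) = ρ := by
    ext t
    rw [← sum_lawOf_prodMk_left _ (fun ω : ι × Ω => X ω.1 ω.2)]
    simp only [hpair, ← mul_sum, hP, mul_one]
  have hjoint : lawOf (fun ω : ι × Ω => ρ ω.1 * p ω.2) (fun ω => (X ω.1 ω.2, ω.1))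
      = fun x => ρ x.2 * lawOf p (X x.2) x.1 := by
    ext ⟨a, t⟩; exact hpair a t
  rw [mi, ent, ent, ent, hX, hT, hjoint, H2_chain_rule ρ _ hP]
  ring

end timeSharing

section mixture

variable {ι α : Type} [Fintype ι] [Fintype α] {ρ : ι → ℝ} {P : ι → α → ℝ}

theorem isPmf_mixture (hρ : IsPmf ρ) (hP : ∀ t, IsPmf (P t)) :
    IsPmf (fun a => ∑ t, ρ t * P t a) :=
  ⟨fun a => sum_nonneg fun t _ => mul_nonneg (hρ.1 t) ((hP t).1 a), by
    rw [sum_comm]; simp only [← mul_sum, (hP _).2, mul_one, hρ.2]⟩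

theorem sum_abs_mixture_sub_le (hρ : IsPmf ρ) (Q : α → ℝ) :
    ∑ a, |∑ t, ρ t * P t a - Q a| ≤ ∑ t, ρ t * ∑ a, |P t a - Q a| :=
  calc ∑ a, |∑ t, ρ t * P t a - Q a|
      = ∑ a, |∑ t, ρ t * (P t a - Q a)| := by
        simp only [mul_sub, sum_sub_distrib, ← sum_mul, hρ.2, one_mul]
    _ ≤ ∑ a, ∑ t, ρ t * |P t a - Q a| := by
        gcongr with a
        refine (abs_sum_le_sum_abs _ _).trans_eq (sum_congr rfl fun t _ => ?_)
        rw [abs_mul, abs_of_nonneg (hρ.1 t)]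
    _ = ∑ t, ρ t * ∑ a, |P t a - Q a| := by
        rw [sum_comm]; simp only [mul_sum]

theorem H2_mixture_sub_le (hρ : IsPmf ρ) (hP : ∀ t, IsPmf (P t)) {Q : α → ℝ} (hQ : IsPmf Q)
    {ε : ℝ} (hε : 0 < ε) (hε₄ : ε < 1 / 4) (hPQ : ∀ t, ∑ a, |P t a - Q a| ≤ 2 * ε) :
    H2 (fun a => ∑ t, ρ t * P t a) - ∑ t, ρ t * H2 (P t)
      ≤ 4 * ε * logb 2 (Fintype.card α / ε) := by
  set c := 2 * ε * logb 2 (Fintype.card α / ε)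
  have hmixQ : ∑ a, |∑ t, ρ t * P t a - Q a| ≤ 2 * ε :=
    (sum_abs_mixture_sub_le hρ Q).trans <| (sum_le_sum fun t _ =>
      mul_le_mul_of_nonneg_left (hPQ t) (hρ.1 t)).trans_eq (by rw [← sum_mul, hρ.2, one_mul])
  have hmix := abs_le.mp (abs_H2_sub_le (isPmf_mixture hρ hP) hQ hε hε₄ hmixQ)
  have hcomp (t : ι) := abs_le.mp (abs_H2_sub_le (hP t) hQ hε hε₄ (hPQ t))
  calc H2 (fun a => ∑ t, ρ t * P t a) - ∑ t, ρ t * H2 (P t)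
      = ∑ t, ρ t * (H2 (fun a => ∑ t, ρ t * P t a) - H2 (P t)) := by
        simp only [mul_sub, sum_sub_distrib, ← sum_mul, hρ.2, one_mul]
    _ ≤ ∑ t, ρ t * (2 * c) := by
        gcongr with t
        · exact hρ.1 t
        · linarith [hmix.2, (hcomp t).1]
    _ = 4 * ε * logb 2 (Fintype.card α / ε) := by
        rw [← sum_mul, hρ.2]; ring

end mixture

theorem isPmf_uniform {n : ℕ} (hn : 0 < n) : IsPmf (fun _ : Fin n => 1 / (n : ℝ)) :=
  ⟨fun _ => by positivity, by simp [hn.ne']⟩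

theorem mutual_info_time_index_le_general
    {𝒲 : Type} [Fintype 𝒲] [DecidableEq 𝒲]
    (n : ℕ) (hn : 0 < n) (p : (Fin n → 𝒲) → ℝ) (Q : 𝒲 → ℝ)
    (hp : IsPmf p) (hQ : IsPmf Q) (ε : ℝ) (hε : ε ∈ Set.Ioo (0 : ℝ) (1 / 4))
    (hTV : TV p (fun w => ∏ t, Q (w t)) = ε) :
    -- joint law of `(T, W^n)` with `T` uniform and independent of `W^n`
    mi (fun ω : Fin n × (Fin n → 𝒲) => (1 / (n : ℝ)) * p ω.2)
        (fun ω => ω.2 ω.1)   -- `W_T`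
        (fun ω => ω.1)       -- `T`
      ≤ 4 * ε * Real.logb 2 ((Fintype.card 𝒲 : ℝ) / ε) := by
  have hmarginal (t : Fin n) : ∑ a, |lawOf p (fun w => w t) a - Q a| ≤ 2 * ε :=
    calc ∑ a, |lawOf p (fun w => w t) a - Q a|
        = ∑ a, |lawOf p (fun w => w t) a
            - lawOf (fun w : Fin n → 𝒲 => ∏ s, Q (w s)) (fun w => w t) a| := by
          simp only [lawOf_pi_eval (Q := fun _ => Q) (fun _ => hQ.2)]
      _ ≤ ∑ w, |p w - ∏ s, Q (w s)| := sum_abs_lawOf_sub_le _ _ _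
      _ = 2 * ε := by rw [← hTV, TV]; ring
  rw [mi_timeSharing (fun _ => 1 / (n : ℝ)) hp.2 (fun t w => w t)]
  exact H2_mixture_sub_le (isPmf_uniform hn) (fun t => lawOf_isPmf hp _) hQ hε.1 hε.2 hmarginal

/-- **Entropy bound from total variation (Lemma VI.3 of Cuff, second part).**
If `‖P_{W^n} − ∏_t Q_W‖_TV = ε ∈ (0,1/4)` and `T` is uniform on `[n]`
independent of `W^n`, then `I(W_T;T) ≤ g(ε) = 4ε log(|𝒲|/ε)`. -/
theorem mutual_info_time_index_le
    {𝒲 : Type} [Fintype 𝒲] [DecidableEq 𝒲] [Nonempty 𝒲]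
    (n : ℕ) (hn : 0 < n) (p : (Fin n → 𝒲) → ℝ) (Q : 𝒲 → ℝ)
    (hp : IsPmf p) (hQ : IsPmf Q) (ε : ℝ) (hε : ε ∈ Set.Ioo (0 : ℝ) (1 / 4))
    (hTV : TV p (fun w => ∏ t, Q (w t)) = ε) :
    -- joint law of `(T, W^n)` with `T` uniform and independent of `W^n`
    mi (fun ω : Fin n × (Fin n → 𝒲) => (1 / (n : ℝ)) * p ω.2)
        (fun ω => ω.2 ω.1)   -- `W_T`
        (fun ω => ω.1)       -- `T`
      ≤ 4 * ε * Real.logb 2 ((Fintype.card 𝒲 : ℝ) / ε) :=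
  mutual_info_time_index_le_general n hn p Q hp hQ ε hε hTV

end
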